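/- For every θ ∈ ℝ and all x₁, x₂ ∈ {0,1}, one has ∑_{h∈{0,1}} exp(W_θ(x₁,h) + W_θ(x₂,h)) = e^{iθ·x₁} if x₁ = x₂, and = 0 if x₁ ≠ x₂, where W_θ(x,h) = −(ln 2)/2 + (iθ/2)·x + iπ·x·h. -/
import Mathlib


open Complex Real

/-- The phase gadget weight function
`W_θ(x,h) = −(ln 2)/2 + (iθ/2)·x + iπ·x·h` for binary `x, h`. -/
noncomputable def Wθ (θ : ℝ) (x h : Fin 2) : ℂ :=
  -(Real.log 2 / 2) + Complex.I * θ / 2 * ((x : ℕ) : ℂ)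
    + Complex.I * Real.pi * ((x : ℕ) : ℂ) * ((h : ℕ) : ℂ)

/-- One hidden neuron with the phase weight `W_θ` on each of its two edges reproduces
the phase-gate matrix entry `Z(θ)_{x₁x₂} = δ_{x₁x₂} e^{iθx₁}`. -/
theorem phase_gadget (θ : ℝ) (x₁ x₂ : Fin 2) :
    ∑ h : Fin 2, Complex.exp (Wθ θ x₁ h + Wθ θ x₂ h)
      = if x₁ = x₂ then Complex.exp (Complex.I * θ * ((x₁ : ℕ) : ℂ)) else 0 := by
  have hlog : Complex.exp (-(Real.log 2 : ℂ)) = 1/2 := by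
    rw [← Complex.ofReal_neg, ← Complex.ofReal_exp, Real.exp_neg, Real.exp_log two_pos]
    push_cast; ring
  have hpi : Complex.exp (Complex.I * Real.pi) = -1 := by
    rw [mul_comm]; exact Complex.exp_pi_mul_I
  have h2pi : Complex.exp (Complex.I * Real.pi * 2) = 1 := by
    rw [show (Complex.I * Real.pi * 2 : ℂ) = 2 * Real.pi * Complex.I by ring,
      Complex.exp_two_pi_mul_I]
  fin_cases x₁ <;> fin_cases x₂ <;>
    simp only [Fin.sum_univ_two, Wθ, Fin.isValue, Fin.val_zero, Fin.val_one,
      Nat.cast_zero, Nat.cast_one, mul_zero, mul_one, zero_mul, add_zero,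
      Fin.mk.injEq, reduceIte] <;>
  · ring_nf
    simp only [Complex.exp_add, hlog, hpi, h2pi, Complex.exp_zero, reduceIte]
    first | ring1 | norm_num
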